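/- arXiv:2507.20277 — 3 statements merged into one kernel-verified Lean document; each statement's English description precedes it below -/
import Mathlib

section
/- Let ψ : ℝ^D → ℝ^D be a continuously differentiable vector field with compact support, and let P, Q : ℝ^D → (0, ∞) be continuously differentiable. Then ∫ Q(z) ⟨∇ log P(z) − ∇ log Q(z), ψ(z)⟩ dz = ∫ Q(z) (⟨ψ(z), ∇ log P(z)⟩ + div ψ(z)) dz; i.e., the inner-product objective between the optimal perturbation direction ∇ log P − ∇ log Q and the ansatz ψ, weighted by Q, can be rewritten in a form free of the intractable term ∇ log Q. -/
open MeasureTheory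

/-- Divergence of a vector field on `EuclideanSpace ℝ (Fin D)`. -/
noncomputable def divergence {D : ℕ} (F : EuclideanSpace ℝ (Fin D) → EuclideanSpace ℝ (Fin D))
    (z : EuclideanSpace ℝ (Fin D)) : ℝ :=
  ∑ j : Fin D, fderiv ℝ F z (EuclideanSpace.single j 1) j

lemma euclid_eq_sum_single {D : ℕ} (x : EuclideanSpace ℝ (Fin D)) :
    x = ∑ j : Fin D, x j • EuclideanSpace.single j 1 := by
  have := (EuclideanSpace.basisFun (Fin D) ℝ).sum_repr x
  simp [EuclideanSpace.basisFun_apply, EuclideanSpace.basisFun_repr] at this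
  exact this.symm

lemma inner_gradient_eq' {D : ℕ} {f : EuclideanSpace ℝ (Fin D) → ℝ} {z v : EuclideanSpace ℝ (Fin D)}
    (hf : DifferentiableAt ℝ f z) :
    (inner ℝ (gradient f z) v : ℝ) = fderiv ℝ f z v := by
  have h := hf.hasGradientAt
  rw [hasGradientAt_iff_hasFDerivAt] at h
  rw [h.fderiv]
  simp [InnerProductSpace.toDualMap_apply_apply]

lemma fderiv_log_comp {D : ℕ} {f : EuclideanSpace ℝ (Fin D) → ℝ} {z : EuclideanSpace ℝ (Fin D)}
    (hf : DifferentiableAt ℝ f z) (hfpos : 0 < f z) :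
    fderiv ℝ (fun w => Real.log (f w)) z = (f z)⁻¹ • fderiv ℝ f z := by
  have h : HasFDerivAt (fun w => Real.log (f w)) ((f z)⁻¹ • fderiv ℝ f z) z :=
    (Real.hasDerivAt_log hfpos.ne').comp_hasFDerivAt z hf.hasFDerivAt
  exact h.fderiv

/-- The Q-weighted inner-product objective between the optimal perturbation direction
`∇ log P - ∇ log Q` and a compactly supported `C¹` ansatz `ψ` can be rewritten in a
form free of `∇ log Q`:
`∫ Q ⟨∇log P - ∇log Q, ψ⟩ = ∫ Q (⟨ψ, ∇log P⟩ + div ψ)`. -/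
theorem integral_inner_score_diff_eq_stein_form
    {D : ℕ} (hD : 1 ≤ D)
    (ψ : EuclideanSpace ℝ (Fin D) → EuclideanSpace ℝ (Fin D))
    (hψ : ContDiff ℝ 1 ψ) (hψsupp : HasCompactSupport ψ)
    (P Q : EuclideanSpace ℝ (Fin D) → ℝ)
    (hPpos : ∀ z, 0 < P z) (hQpos : ∀ z, 0 < Q z)
    (hP : ContDiff ℝ 1 P) (hQ : ContDiff ℝ 1 Q) :
    ∫ z, Q z * (inner ℝ (gradient (fun w => Real.log (P w)) z
          - gradient (fun w => Real.log (Q w)) z) (ψ z) : ℝ)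
      = ∫ z, Q z * ((inner ℝ (ψ z) (gradient (fun w => Real.log (P w)) z) : ℝ)
          + divergence ψ z) := by
  classical
  have hQd : Differentiable ℝ Q := hQ.differentiable one_ne_zero
  have hPd : Differentiable ℝ P := hP.differentiable one_ne_zero
  have hψd : Differentiable ℝ ψ := hψ.differentiable one_ne_zero
  set e : Fin D → EuclideanSpace ℝ (Fin D) := fun j => EuclideanSpace.single j 1 with he
  -- component functions of ψ
  set g : Fin D → EuclideanSpace ℝ (Fin D) → ℝ := fun j z => ψ z j with hg
  have hgdiff : ∀ j, Differentiable ℝ (g j) := fun j => by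
    exact (EuclideanSpace.proj (𝕜 := ℝ) j).differentiable.comp hψd
  have hgsupp : ∀ j, HasCompactSupport (g j) := fun j =>
    hψsupp.comp_left (g := fun v : EuclideanSpace ℝ (Fin D) => v j) rfl
  have hgcont : ∀ j, Continuous (g j) := fun j => (hgdiff j).continuous
  -- continuity of fderivs
  have hfQcont : Continuous (fderiv ℝ Q) := hQ.continuous_fderiv one_ne_zero
  have hfψcont : Continuous (fderiv ℝ ψ) := hψ.continuous_fderiv one_ne_zero
  -- g j has compactly supported continuous deriv
  have hgC : ∀ j, ContDiff ℝ 1 (g j) := fun j => by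
    exact (EuclideanSpace.proj (𝕜 := ℝ) j).contDiff.comp hψ
  have hfgcont : ∀ j, Continuous (fun z => fderiv ℝ (g j) z (e j)) := by
    intro j
    exact ((hgC j).continuous_fderiv one_ne_zero).clm_apply continuous_const
  have hfgsupp : ∀ j, HasCompactSupport (fun z => fderiv ℝ (g j) z (e j)) := by
    intro j
    exact (HasCompactSupport.fderiv (𝕜 := ℝ) (hgsupp j)).comp_left
      (g := fun L : EuclideanSpace ℝ (Fin D) →L[ℝ] ℝ => L (e j)) rfl
  -- A and B
  set A : Fin D → EuclideanSpace ℝ (Fin D) → ℝ := fun j z => fderiv ℝ Q z (e j) * g j z with hA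
  set B : Fin D → EuclideanSpace ℝ (Fin D) → ℝ :=
    fun j z => Q z * fderiv ℝ (g j) z (e j) with hB
  have hAint : ∀ j, Integrable (A j) := by
    intro j
    exact (Continuous.mul (hfQcont.clm_apply continuous_const) (hgcont j)).integrable_of_hasCompactSupport
      ((hgsupp j).mul_left)
  have hBint : ∀ j, Integrable (B j) := by
    intro j
    exact (hQ.continuous.mul (hfgcont j)).integrable_of_hasCompactSupport ((hfgsupp j).mul_left)
  have hQgint : ∀ j, Integrable (fun z => Q z * g j z) := by
    intro j
    exact (hQ.continuous.mul (hgcont j)).integrable_of_hasCompactSupport ((hgsupp j).mul_left)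
  -- integration by parts for each coordinate
  have ibp : ∀ j, ∫ z, B j z = - ∫ z, A j z := by
    intro j
    exact integral_mul_fderiv_eq_neg_fderiv_mul_of_integrable (hAint j) (hBint j) (hQgint j)
      (fun x _ => hQd x) (fun x _ => hgdiff j x)
  -- the common term C
  set C : EuclideanSpace ℝ (Fin D) → ℝ :=
    fun z => Q z * ((P z)⁻¹ * fderiv ℝ P z (ψ z)) with hC
  have hCcont : Continuous C := by
    have : Continuous fun z => fderiv ℝ P z (ψ z) :=
      (hP.continuous_fderiv one_ne_zero).clm_apply hψd.continuous
    exact hQ.continuous.mul ((hP.continuous.inv₀ (fun z => (hPpos z).ne')).mul this)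
  have hCsupp : HasCompactSupport C := by
    apply HasCompactSupport.mul_left
    apply HasCompactSupport.mul_left
    have : HasCompactSupport (fun z => (fderiv ℝ P z) (ψ z)) := by
      apply HasCompactSupport.intro (K := tsupport ψ) hψsupp.isCompact
      intro z hz
      have : ψ z = 0 := image_eq_zero_of_notMem_tsupport hz
      simp [this]
    exact this
  have hCint : Integrable C := hCcont.integrable_of_hasCompactSupport hCsupp
  -- rewriting the LHS integrand
  have hfderiv_apply : ∀ (f : EuclideanSpace ℝ (Fin D) → ℝ) z, Differentiable ℝ f →
      fderiv ℝ f z (ψ z) = ∑ j, fderiv ℝ f z (e j) * g j z := by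
    intro f z hf
    conv_lhs => rw [euclid_eq_sum_single (ψ z)]
    rw [map_sum]
    refine Finset.sum_congr rfl fun j _ => ?_
    rw [(fderiv ℝ f z).map_smul]
    simp [mul_comm, hg, he]
  have hLHS : ∀ z, Q z * (inner ℝ (gradient (fun w => Real.log (P w)) z
          - gradient (fun w => Real.log (Q w)) z) (ψ z) : ℝ)
      = C z - ∑ j, A j z := by
    intro z
    have hlogP : DifferentiableAt ℝ (fun w => Real.log (P w)) z :=
      ((Real.differentiableAt_log (hPpos z).ne').comp z (hPd z))
    have hlogQ : DifferentiableAt ℝ (fun w => Real.log (Q w)) z :=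
      ((Real.differentiableAt_log (hQpos z).ne').comp z (hQd z))
    rw [inner_sub_left, inner_gradient_eq' hlogP, inner_gradient_eq' hlogQ,
      fderiv_log_comp (hPd z) (hPpos z), fderiv_log_comp (hQd z) (hQpos z)]
    simp only [ContinuousLinearMap.smul_apply, smul_eq_mul]
    rw [hfderiv_apply Q z hQd]
    field_simp [hC, hA, (hQpos z).ne']
    ring
  have hRHS : ∀ z, Q z * ((inner ℝ (ψ z) (gradient (fun w => Real.log (P w)) z) : ℝ)
          + divergence ψ z)
      = C z + ∑ j, B j z := by
    intro z
    have hlogP : DifferentiableAt ℝ (fun w => Real.log (P w)) z :=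
      ((Real.differentiableAt_log (hPpos z).ne').comp z (hPd z))
    rw [real_inner_comm, inner_gradient_eq' hlogP, fderiv_log_comp (hPd z) (hPpos z)]
    have hdiv : divergence ψ z = ∑ j, fderiv ℝ (g j) z (e j) := by
      unfold divergence
      refine Finset.sum_congr rfl fun j _ => ?_
      have hcomp : fderiv ℝ (g j) z
          = (EuclideanSpace.proj (𝕜 := ℝ) j).comp (fderiv ℝ ψ z) := by
        have := ((EuclideanSpace.proj (𝕜 := ℝ) j).hasFDerivAt.comp z (hψd z).hasFDerivAt).fderiv
        exact this
      rw [hcomp]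
      rfl
    rw [hdiv]
    simp only [ContinuousLinearMap.smul_apply, smul_eq_mul, hC, hB]
    rw [mul_add, Finset.mul_sum]
  have hsum : ∑ j, ∫ z, B j z = - ∑ j, ∫ z, A j z := by
    rw [← Finset.sum_neg_distrib]
    exact Finset.sum_congr rfl fun j _ => ibp j
  have eqL : (∫ z, Q z * (inner ℝ (gradient (fun w => Real.log (P w)) z
          - gradient (fun w => Real.log (Q w)) z) (ψ z) : ℝ))
      = (∫ z, C z) - ∑ j, ∫ z, A j z := by
    rw [integral_congr_ae (Filter.Eventually.of_forall hLHS),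
      integral_sub hCint (integrable_finset_sum _ fun j _ => hAint j),
      integral_finset_sum _ fun j _ => hAint j]
  have eqR : (∫ z, Q z * ((inner ℝ (ψ z) (gradient (fun w => Real.log (P w)) z) : ℝ)
          + divergence ψ z))
      = (∫ z, C z) + ∑ j, ∫ z, B j z := by
    rw [integral_congr_ae (Filter.Eventually.of_forall hRHS),
      integral_add hCint (integrable_finset_sum _ fun j _ => hBint j),
      integral_finset_sum _ fun j _ => hBint j]
  rw [eqL, eqR, hsum]
  ring
end

section
/- Let P, Q : ℝ^D → (0, ∞) be twice continuously differentiable, and suppose the vector field F(z) := Q(z) (∇ log Q(z) − ∇ log P(z)) is continuously differentiable with compact support. Then ∫ div F(z) · log(Q(z)/P(z)) dz = − ∫ Q(z) ‖∇ log Q(z) − ∇ log P(z)‖² dz; in particular, this quantity is ≤ 0. (This is the dissipation identity showing that, under the controlled continuity equation ∂_t Q_t = div(Q_t (∇ log Q_t − ∇ log P)) with optimal control u = −∇ log Q_t, the Kullback–Leibler divergence D_KL(Q_t ‖ P) is non-increasing.) -/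
open MeasureTheory

/-- The KL dissipation identity: for positive `C²` functions `P`, `Q` such that the
vector field `F = Q (∇ log Q - ∇ log P)` is `C¹` with compact support,
`∫ div F · log (Q/P) = - ∫ Q ‖∇ log Q - ∇ log P‖²`, which is in particular `≤ 0`. -/
theorem kl_dissipation_identity
    {D : ℕ} (hD : 1 ≤ D)
    (P Q : EuclideanSpace ℝ (Fin D) → ℝ)
    (hPpos : ∀ z, 0 < P z) (hQpos : ∀ z, 0 < Q z)
    (hP : ContDiff ℝ 2 P) (hQ : ContDiff ℝ 2 Q)
    (F : EuclideanSpace ℝ (Fin D) → EuclideanSpace ℝ (Fin D))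
    (hF : ∀ z, F z = Q z • (gradient (fun w => Real.log (Q w)) z
        - gradient (fun w => Real.log (P w)) z))
    (hFC1 : ContDiff ℝ 1 F) (hFsupp : HasCompactSupport F) :
    (∫ z, divergence F z * Real.log (Q z / P z)
        = - ∫ z, Q z * ‖gradient (fun w => Real.log (Q w)) z
            - gradient (fun w => Real.log (P w)) z‖ ^ 2)
    ∧ (∫ z, divergence F z * Real.log (Q z / P z)) ≤ 0 := by
  set lQ : EuclideanSpace ℝ (Fin D) → ℝ := fun w => Real.log (Q w) with hlQ
  set lP : EuclideanSpace ℝ (Fin D) → ℝ := fun w => Real.log (P w) with hlP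
  set d : EuclideanSpace ℝ (Fin D) → EuclideanSpace ℝ (Fin D) := fun z => gradient lQ z - gradient lP z with hd
  set g : EuclideanSpace ℝ (Fin D) → ℝ := fun z => lQ z - lP z with hgdef
  have hlQC : ContDiff ℝ 2 lQ := hQ.log fun z => (hQpos z).ne'
  have hlPC : ContDiff ℝ 2 lP := hP.log fun z => (hPpos z).ne'
  have hgC : ContDiff ℝ 2 g := hlQC.sub hlPC
  have hgd : Differentiable ℝ g := hgC.differentiable (by norm_num)
  have hFd : Differentiable ℝ F := hFC1.differentiable (by norm_num)
  have hFcont : Continuous F := hFC1.continuous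
  have hgcont : Continuous g := hgC.continuous
  -- fderiv of g in direction v equals inner product with d
  have hfg : ∀ z v, fderiv ℝ g z v = inner ℝ (d z) v := by
    intro z v
    have h1 : (inner ℝ (gradient lQ z) v : ℝ) = fderiv ℝ lQ z v :=
      InnerProductSpace.toDual_symm_apply
    have h2 : (inner ℝ (gradient lP z) v : ℝ) = fderiv ℝ lP z v :=
      InnerProductSpace.toDual_symm_apply
    have h3 : fderiv ℝ g z = fderiv ℝ lQ z - fderiv ℝ lP z :=
      fderiv_sub (hlQC.differentiable (by norm_num) z) (hlPC.differentiable (by norm_num) z)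
    simp [hd, inner_sub_left, h1, h2, h3]
  have hloggz : ∀ z, Real.log (Q z / P z) = g z := fun z =>
    Real.log_div (hQpos z).ne' (hPpos z).ne'
  -- componentwise fderiv of F
  have hcomp : ∀ (j : Fin D) z, fderiv ℝ (fun w => F w j) z =
      (EuclideanSpace.proj j : EuclideanSpace ℝ (Fin D) →L[ℝ] ℝ).comp (fderiv ℝ F z) := by
    intro j z
    exact ((EuclideanSpace.proj j).hasFDerivAt.comp z (hFd z).hasFDerivAt).fderiv
  have hfderivF : Continuous (fderiv ℝ F) := hFC1.continuous_fderiv (by norm_num)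
  -- integrability of the pieces
  have hint1 : ∀ j : Fin D,
      Integrable (fun z => fderiv ℝ F z (EuclideanSpace.single j 1) j * g z) := by
    intro j
    apply Continuous.integrable_of_hasCompactSupport
    · exact ((EuclideanSpace.proj j).continuous.comp (hfderivF.clm_apply continuous_const)).mul hgcont
    · exact ((hFsupp.fderiv ℝ).comp_left
        (g := fun L : EuclideanSpace ℝ (Fin D) →L[ℝ] EuclideanSpace ℝ (Fin D) => L (EuclideanSpace.single j 1) j) rfl).mul_right
  have hint2 : ∀ j : Fin D,
      Integrable (fun z => F z j * fderiv ℝ g z (EuclideanSpace.single j 1)) := by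
    intro j
    apply Continuous.integrable_of_hasCompactSupport
    · exact ((EuclideanSpace.proj j).continuous.comp hFcont).mul
        ((hgC.continuous_fderiv (by norm_num)).clm_apply continuous_const)
    · exact (hFsupp.comp_left (g := fun v : EuclideanSpace ℝ (Fin D) => v j) rfl).mul_right
  have hint3 : ∀ j : Fin D, Integrable (fun z => F z j * g z) := by
    intro j
    apply Continuous.integrable_of_hasCompactSupport
    · exact ((EuclideanSpace.proj j).continuous.comp hFcont).mul hgcont
    · exact (hFsupp.comp_left (g := fun v : EuclideanSpace ℝ (Fin D) => v j) rfl).mul_right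
  -- integration by parts in each coordinate
  have hIBP : ∀ j : Fin D,
      ∫ z, fderiv ℝ F z (EuclideanSpace.single j 1) j * g z
        = - ∫ z, F z j * fderiv ℝ g z (EuclideanSpace.single j 1) := by
    intro j
    have hFjd : Differentiable ℝ (fun w => F w j) := by
      have h : Differentiable ℝ
          (⇑(EuclideanSpace.proj (𝕜 := ℝ) (ι := Fin D) j) ∘ F) :=
        (EuclideanSpace.proj j).differentiable.comp hFd
      exact h
    have := integral_mul_fderiv_eq_neg_fderiv_mul_of_integrable
      (f := fun w => F w j) (g := g) (v := EuclideanSpace.single j 1)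
      (μ := volume) (by
        simp only [hcomp, ContinuousLinearMap.comp_apply, PiLp.proj_apply]
        exact hint1 j) (hint2 j) (hint3 j) (fun x _ => hFjd x) (fun x _ => hgd x)
    simp only [hcomp, ContinuousLinearMap.comp_apply, PiLp.proj_apply] at this
    linarith
  -- the pointwise identity for the sum after IBP
  have hpt : ∀ z, ∑ j : Fin D, F z j * fderiv ℝ g z (EuclideanSpace.single j 1)
      = Q z * ‖d z‖ ^ 2 := by
    intro z
    have : ∀ j : Fin D, fderiv ℝ g z (EuclideanSpace.single j 1) = d z j := by
      intro j
      rw [hfg]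
      simp [EuclideanSpace.inner_single_right]
    simp_rw [this]
    have hsum : ∑ j : Fin D, F z j * d z j = inner ℝ (F z) (d z) := by
      rw [PiLp.inner_apply]
      simp [RCLike.inner_apply, mul_comm]
    rw [hsum, hF z, real_inner_smul_left, real_inner_self_eq_norm_sq]
  -- main computation
  have key : ∫ z, divergence F z * Real.log (Q z / P z)
      = - ∫ z, Q z * ‖d z‖ ^ 2 := by
    have e1 : (fun z => divergence F z * Real.log (Q z / P z))
        = fun z => ∑ j : Fin D, fderiv ℝ F z (EuclideanSpace.single j 1) j * g z := by
      funext z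
      rw [hloggz z, divergence, Finset.sum_mul]
    rw [e1, integral_finset_sum _ (fun j _ => hint1 j)]
    have e2 : ∀ j ∈ Finset.univ, ∫ z, fderiv ℝ F z (EuclideanSpace.single j 1) j * g z
        = - ∫ z, F z j * fderiv ℝ g z (EuclideanSpace.single j 1) := fun j _ => hIBP j
    rw [Finset.sum_congr rfl e2, Finset.sum_neg_distrib]
    congr 1
    rw [← integral_finset_sum _ (fun j _ => hint2 j)]
    exact integral_congr_ae (Filter.Eventually.of_forall hpt)
  refine ⟨key, ?_⟩
  rw [key, neg_nonpos]
  exact integral_nonneg fun z => mul_nonneg (hQpos z).le (sq_nonneg _)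
end

section
/- Let p : ℝ^D → (0, ∞) be a probability density with respect to Lebesgue measure, let C > 0, and let (g_τ)_{τ ∈ ℕ} be a sequence of measurable functions g_τ : ℝ^D → (0, ∞) with g_τ(z) ≤ C for all z, and with m_τ := ∫ g_τ(z) p(z) dz ∈ (0, ∞) for every τ. Define π_τ(z) := g_τ(z) p(z) / m_τ, and assume for every τ that z ↦ π_τ(z) log(g_{τ+1}(z)/g_τ(z)) and z ↦ π_τ(z) log(π_τ(z)/π_{τ+1}(z)) are Lebesgue-integrable and that the M-step improvement ∫ π_τ log g_{τ+1} ≥ ∫ π_τ log g_τ holds. Then the sequence of marginal log-likelihoods (log m_τ)_{τ ∈ ℕ} is nondecreasing and bounded above by log C, and hence converges to a finite limit. -/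
open MeasureTheory Filter

lemma xlogx_bound {C x : ℝ} (hC : 0 < C) (hx : 0 < x) (hxC : x ≤ C) :
    |x * Real.log x| ≤ 1 + C * |Real.log C| := by
  have hCl : 0 ≤ C * |Real.log C| := by positivity
  rcases le_or_gt x 1 with h1 | h1
  · have hlog : Real.log x ≤ 0 := Real.log_nonpos hx.le h1
    have hinv : Real.log (1 / x) ≤ 1 / x - 1 := Real.log_le_sub_one_of_pos (by positivity)
    have : -Real.log x ≤ 1 / x - 1 := by rwa [Real.log_div one_ne_zero hx.ne', Real.log_one,
      zero_sub] at hinv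
    have h2 : x * (-Real.log x) ≤ x * (1 / x - 1) := by
      exact mul_le_mul_of_nonneg_left this hx.le
    have h3 : x * (1 / x - 1) = 1 - x := by field_simp
    have : |x * Real.log x| = x * (-Real.log x) := by
      rw [abs_of_nonpos (mul_nonpos_of_nonneg_of_nonpos hx.le hlog)]; ring
    rw [this]
    nlinarith
  · have hC1 : 1 < C := lt_of_lt_of_le h1 hxC
    have hlogx : 0 ≤ Real.log x := Real.log_nonneg h1.le
    have hlogC : 0 ≤ Real.log C := Real.log_nonneg hC1.le
    have : x * Real.log x ≤ C * Real.log C :=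
      mul_le_mul hxC (Real.log_le_log hx hxC) hlogx (by linarith)
    rw [abs_of_nonneg (mul_nonneg (by linarith) hlogx)]
    rw [abs_of_nonneg hlogC]
    linarith

/-- Convergence of the exact EM iteration: if each likelihood `g τ` is bounded by `C`,
each evidence `m τ = ∫ g τ p` is positive and finite, and each M-step improves
`∫ π_τ log g_{τ+1} ≥ ∫ π_τ log g_τ` (with `π_τ = g_τ p / m_τ` the posterior), then the
sequence of marginal log-likelihoods `log m_τ` is nondecreasing, bounded above by
`log C`, and converges to a finite limit. -/
theorem em_iteration_log_likelihood_converges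
    {D : ℕ} (hD : 1 ≤ D)
    (p : EuclideanSpace ℝ (Fin D) → ℝ)
    (hppos : ∀ z, 0 < p z) (hpmeas : Measurable p)
    (hpdens : ∫ z, p z = 1)
    (C : ℝ) (hC : 0 < C)
    (g : ℕ → EuclideanSpace ℝ (Fin D) → ℝ)
    (hgpos : ∀ τ z, 0 < g τ z) (hgmeas : ∀ τ, Measurable (g τ))
    (hgle : ∀ τ z, g τ z ≤ C)
    (m : ℕ → ℝ) (hm : ∀ τ, m τ = ∫ z, g τ z * p z) (hmpos : ∀ τ, 0 < m τ)
    (π : ℕ → EuclideanSpace ℝ (Fin D) → ℝ)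
    (hπ : ∀ τ z, π τ z = g τ z * p z / m τ)
    (hint1 : ∀ τ, Integrable (fun z => π τ z * Real.log (g (τ + 1) z / g τ z)))
    (hint2 : ∀ τ, Integrable (fun z => π τ z * Real.log (π τ z / π (τ + 1) z)))
    (hMstep : ∀ τ, (∫ z, π τ z * Real.log (g (τ + 1) z))
        ≥ ∫ z, π τ z * Real.log (g τ z)) :
    Monotone (fun τ => Real.log (m τ))
      ∧ (∀ τ, Real.log (m τ) ≤ Real.log C)
      ∧ ∃ L : ℝ, Tendsto (fun τ => Real.log (m τ)) atTop (nhds L) := by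
  -- p is integrable
  have hp_int : Integrable p := by
    by_contra h
    rw [integral_undef h] at hpdens
    norm_num at hpdens
  -- g τ * p is integrable
  have hgp_int : ∀ τ, Integrable (fun z => g τ z * p z) := by
    intro τ
    refine (hp_int.const_mul C).mono ((hgmeas τ).mul hpmeas).aestronglyMeasurable ?_
    filter_upwards with z
    rw [Real.norm_eq_abs, Real.norm_eq_abs,
      abs_of_nonneg (mul_nonneg (hgpos τ z).le (hppos z).le),
      abs_of_nonneg (mul_nonneg hC.le (hppos z).le)]
    exact mul_le_mul_of_nonneg_right (hgle τ z) (hppos z).le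
  -- m τ ≤ C
  have hmle : ∀ τ, m τ ≤ C := by
    intro τ
    rw [hm τ]
    calc (∫ z, g τ z * p z) ≤ ∫ z, C * p z := by
          refine integral_mono (hgp_int τ) (hp_int.const_mul C) fun z => ?_
          exact mul_le_mul_of_nonneg_right (hgle τ z) (hppos z).le
      _ = C := by rw [integral_const_mul, hpdens, mul_one]
  -- π τ is integrable with integral 1
  have hπ_int : ∀ τ, Integrable (π τ) := by
    intro τ
    have : π τ = fun z => g τ z * p z / m τ := funext (hπ τ)
    rw [this]
    exact (hgp_int τ).div_const _
  have hπ_one : ∀ τ, ∫ z, π τ z = 1 := by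
    intro τ
    simp only [hπ τ]
    rw [integral_div, ← hm τ, div_self (hmpos τ).ne']
  have hπpos : ∀ τ z, 0 < π τ z := fun τ z => by
    rw [hπ τ z]; exact div_pos (mul_pos (hgpos τ z) (hppos z)) (hmpos τ)
  -- π τ * log (g τ) is integrable (since x log x is bounded on (0, C])
  have hb_int : ∀ τ, Integrable (fun z => π τ z * Real.log (g τ z)) := by
    intro τ
    have heq : (fun z => π τ z * Real.log (g τ z))
        = fun z => (g τ z * Real.log (g τ z)) * p z / m τ := by
      funext z; rw [hπ τ z]; ring
    rw [heq]
    have hint : Integrable (fun z => (g τ z * Real.log (g τ z)) * p z) := by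
      refine (hp_int.const_mul (1 + C * |Real.log C|)).mono
        (((hgmeas τ).mul (Real.measurable_log.comp (hgmeas τ))).mul
          hpmeas).aestronglyMeasurable ?_
      filter_upwards with z
      rw [Real.norm_eq_abs, Real.norm_eq_abs, abs_mul,
        abs_of_nonneg (mul_nonneg (by positivity) (hppos z).le),
        abs_of_nonneg (hppos z).le]
      exact mul_le_mul_of_nonneg_right (xlogx_bound hC (hgpos τ z) (hgle τ z)) (hppos z).le
    exact hint.div_const _
  -- key monotonicity step
  have key : ∀ τ, Real.log (m τ) ≤ Real.log (m (τ + 1)) := by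
    intro τ
    -- integrability of π τ * log g (τ+1)
    have ha_int : Integrable (fun z => π τ z * Real.log (g (τ + 1) z)) := by
      refine ((hint1 τ).add (hb_int τ)).congr (Filter.Eventually.of_forall fun z => ?_)
      show π τ z * Real.log (g (τ + 1) z / g τ z) + π τ z * Real.log (g τ z) = _
      rw [Real.log_div (hgpos (τ+1) z).ne' (hgpos τ z).ne']
      ring
    -- step B: first integral is nonneg
    have hB : 0 ≤ ∫ z, π τ z * Real.log (g (τ + 1) z / g τ z) := by
      have heq : (∫ z, π τ z * Real.log (g (τ + 1) z / g τ z))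
          = (∫ z, π τ z * Real.log (g (τ + 1) z)) - ∫ z, π τ z * Real.log (g τ z) := by
        rw [← integral_sub ha_int (hb_int τ)]
        congr 1
        funext z
        rw [Real.log_div (hgpos (τ+1) z).ne' (hgpos τ z).ne']
        ring
      rw [heq, sub_nonneg]
      exact hMstep τ
    -- step C: KL term is nonneg
    have hC' : 0 ≤ ∫ z, π τ z * Real.log (π τ z / π (τ + 1) z) := by
      have hpt : ∀ z, π τ z - π (τ + 1) z ≤ π τ z * Real.log (π τ z / π (τ + 1) z) := by
        intro z
        have h1 : Real.log (π (τ + 1) z / π τ z) ≤ π (τ + 1) z / π τ z - 1 :=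
          Real.log_le_sub_one_of_pos (div_pos (hπpos (τ+1) z) (hπpos τ z))
        have h2 : Real.log (π τ z / π (τ + 1) z) = -Real.log (π (τ + 1) z / π τ z) := by
          rw [Real.log_div (hπpos τ z).ne' (hπpos (τ+1) z).ne',
            Real.log_div (hπpos (τ+1) z).ne' (hπpos τ z).ne']
          ring
        rw [h2]
        have h3 : π τ z * Real.log (π (τ + 1) z / π τ z)
            ≤ π τ z * (π (τ + 1) z / π τ z - 1) :=
          mul_le_mul_of_nonneg_left h1 (hπpos τ z).le
        have h4 : π τ z * (π (τ + 1) z / π τ z - 1) = π (τ + 1) z - π τ z := by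
          rw [mul_sub, mul_one, mul_div_cancel₀ _ (hπpos τ z).ne']
        nlinarith
      have hsub : Integrable (fun z => π τ z - π (τ + 1) z) :=
        (hπ_int τ).sub (hπ_int (τ+1))
      have := integral_mono hsub (hint2 τ) hpt
      rwa [integral_sub (hπ_int τ) (hπ_int (τ+1)), hπ_one τ, hπ_one (τ+1),
        sub_self] at this
    -- step D: identity
    have hid : (∫ z, π τ z * Real.log (π τ z / π (τ + 1) z))
        = -(∫ z, π τ z * Real.log (g (τ + 1) z / g τ z))
          + (Real.log (m (τ + 1)) - Real.log (m τ)) := by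
      have hpt : ∀ z, π τ z * Real.log (π τ z / π (τ + 1) z)
          = π τ z * (Real.log (m (τ + 1)) - Real.log (m τ))
            - π τ z * Real.log (g (τ + 1) z / g τ z) := by
        intro z
        have e1 : Real.log (π τ z / π (τ + 1) z)
            = Real.log (g τ z) - Real.log (g (τ + 1) z)
              + (Real.log (m (τ + 1)) - Real.log (m τ)) := by
          have n1 : g τ z * p z ≠ 0 := (mul_pos (hgpos τ z) (hppos z)).ne'
          have n2 : g (τ+1) z * p z ≠ 0 := (mul_pos (hgpos (τ+1) z) (hppos z)).ne'
          rw [hπ τ z, hπ (τ+1) z,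
            Real.log_div (div_pos (mul_pos (hgpos τ z) (hppos z)) (hmpos τ)).ne'
              (div_pos (mul_pos (hgpos (τ+1) z) (hppos z)) (hmpos (τ+1))).ne',
            Real.log_div n1 (hmpos τ).ne',
            Real.log_div n2 (hmpos (τ+1)).ne',
            Real.log_mul (hgpos τ z).ne' (hppos z).ne',
            Real.log_mul (hgpos (τ+1) z).ne' (hppos z).ne']
          ring
        have e2 : Real.log (g (τ + 1) z / g τ z)
            = Real.log (g (τ + 1) z) - Real.log (g τ z) :=
          Real.log_div (hgpos (τ+1) z).ne' (hgpos τ z).ne'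
        rw [e1, e2]
        ring
      calc (∫ z, π τ z * Real.log (π τ z / π (τ + 1) z))
          = ∫ z, (π τ z * (Real.log (m (τ + 1)) - Real.log (m τ))
              - π τ z * Real.log (g (τ + 1) z / g τ z)) := by
            congr 1; funext z; exact hpt z
        _ = (∫ z, π τ z * (Real.log (m (τ + 1)) - Real.log (m τ)))
              - ∫ z, π τ z * Real.log (g (τ + 1) z / g τ z) :=
            integral_sub ((hπ_int τ).mul_const _) (hint1 τ)
        _ = -(∫ z, π τ z * Real.log (g (τ + 1) z / g τ z))
              + (Real.log (m (τ + 1)) - Real.log (m τ)) := by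
            rw [integral_mul_const, hπ_one τ, one_mul]
            ring
    -- combine
    linarith [hB, hC', hid]
  have hmono : Monotone (fun τ => Real.log (m τ)) := monotone_nat_of_le_succ key
  have hbdd : ∀ τ, Real.log (m τ) ≤ Real.log C :=
    fun τ => Real.log_le_log (hmpos τ) (hmle τ)
  refine ⟨hmono, hbdd, ⟨⨆ τ, Real.log (m τ), tendsto_atTop_ciSup hmono ?_⟩⟩
  exact ⟨Real.log C, fun x ⟨τ, hτ⟩ => hτ ▸ hbdd τ⟩
end
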